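/- Let H and K be Hilbert spaces and let Λ₁, Λ₂ : H → K be bounded linear operators. For j = 1,2 let 𝒞_j := { (f, Λ_j f) : f ∈ H } ⊂ H × K be the graph of Λ_j, and equip H × K with the norm ‖(f,g)‖ := (‖f‖_H² + ‖g‖_K²)^{1/2}. Define dist(𝒞₁, 𝒞₂) := max{ sup_{0 ≠ (f₁,g₁) ∈ 𝒞₁} inf_{(f₂,g₂) ∈ 𝒞₂} ‖(f₁−f₂, g₁−g₂)‖ / ‖(f₁,g₁)‖ , sup_{0 ≠ (f₂,g₂) ∈ 𝒞₂} inf_{(f₁,g₁) ∈ 𝒞₁} ‖(f₁−f₂, g₁−g₂)‖ / ‖(f₂,g₂)‖ }. Then ‖Λ₁ − Λ₂‖ / ( √(1 + ‖Λ₁‖²) · √(1 + ‖Λ₂‖²) ) ≤ dist(𝒞₁, 𝒞₂) ≤ ‖Λ₁ − Λ₂‖, where ‖·‖ on operators denotes the operator norm from H to K. -/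

import Mathlib

/-!
The graph of `T` at `f` has norm between `‖f‖` and `√(1 + ‖T‖²) ‖f‖`. For the upper bound,
compare `(f, T f)` with the point `(f, S f)` of the other graph: their difference is
`(0, (T - S) f)`. For the lower bound, for any `g` Cauchy–Schwarz in `ℝ²` gives
`‖(T - S) f‖ = ‖(T f - S g) - S (f - g)‖ ≤ √(1 + ‖S‖²) ‖(f - g, T f - S g)‖`,
so dividing by `‖(f, T f)‖ ≤ √(1 + ‖T‖²) ‖f‖` bounds `‖(T - S) f‖ / ‖f‖` by the product of the
two constants and the one-sided distance from the graph of `T` to that of `S`.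
-/

noncomputable section

/-- The norm `‖(f,g)‖ = (‖f‖² + ‖g‖²)^{1/2}` on `H × K`. -/
def pairNorm {H K : Type*} [NormedAddCommGroup H] [NormedAddCommGroup K]
    (f : H) (g : K) : ℝ :=
  Real.sqrt (‖f‖ ^ 2 + ‖g‖ ^ 2)

/-- The (normalized, symmetrized) distance between the graphs
`𝒞_j = {(f, Λ_j f)}` of two bounded operators. A nonzero element of `𝒞_j`
corresponds exactly to `f ≠ 0`. -/
def graphDist {H K : Type*} [NormedAddCommGroup H] [InnerProductSpace ℝ H]
    [NormedAddCommGroup K] [InnerProductSpace ℝ K]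
    (Λ₁ Λ₂ : H →L[ℝ] K) : ℝ :=
  max
    (⨆ f₁ : {x : H // x ≠ 0}, ⨅ f₂ : H,
      pairNorm ((f₁ : H) - f₂) (Λ₁ (f₁ : H) - Λ₂ f₂) / pairNorm (f₁ : H) (Λ₁ (f₁ : H)))
    (⨆ f₂ : {x : H // x ≠ 0}, ⨅ f₁ : H,
      pairNorm (f₁ - (f₂ : H)) (Λ₁ f₁ - Λ₂ (f₂ : H)) / pairNorm (f₂ : H) (Λ₂ (f₂ : H)))

section PairNorm

variable {H K : Type*} [NormedAddCommGroup H] [NormedAddCommGroup K]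

lemma pairNorm_nonneg (f : H) (g : K) : 0 ≤ pairNorm f g := Real.sqrt_nonneg _

lemma norm_le_pairNorm (f : H) (g : K) : ‖f‖ ≤ pairNorm f g :=
  Real.le_sqrt_of_sq_le (by nlinarith [sq_nonneg ‖g‖])

lemma pairNorm_pos {f : H} (hf : f ≠ 0) (g : K) : 0 < pairNorm f g :=
  (norm_pos_iff.mpr hf).trans_le (norm_le_pairNorm f g)

lemma pairNorm_zero_left (g : K) : pairNorm (0 : H) g = ‖g‖ := by
  simp [pairNorm, Real.sqrt_sq (norm_nonneg g)]

lemma pairNorm_sub_comm (f₁ f₂ : H) (g₁ g₂ : K) :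
    pairNorm (f₁ - f₂) (g₁ - g₂) = pairNorm (f₂ - f₁) (g₂ - g₁) := by
  simp only [pairNorm, norm_sub_rev]

lemma add_mul_le_sqrt_one_add_sq_mul_sqrt (a b c : ℝ) :
    a + c * b ≤ Real.sqrt (1 + c ^ 2) * Real.sqrt (b ^ 2 + a ^ 2) := by
  rw [← Real.sqrt_mul (by positivity)]
  exact Real.le_sqrt_of_sq_le (by nlinarith [sq_nonneg (b - c * a)])

variable {𝕜 : Type*} [NontriviallyNormedField 𝕜] [NormedSpace 𝕜 H] [NormedSpace 𝕜 K]

lemma pairNorm_apply_le (T : H →L[𝕜] K) (f : H) :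
    pairNorm f (T f) ≤ Real.sqrt (1 + ‖T‖ ^ 2) * ‖f‖ := by
  rw [← Real.sqrt_sq (norm_nonneg f), ← Real.sqrt_mul (by positivity)]
  apply Real.sqrt_le_sqrt
  nlinarith [T.le_opNorm f, norm_nonneg (T f), mul_nonneg T.opNorm_nonneg (norm_nonneg f)]

lemma norm_sub_apply_le (T : H →L[𝕜] K) (f : H) (g : K) :
    ‖g - T f‖ ≤ Real.sqrt (1 + ‖T‖ ^ 2) * pairNorm f g :=
  calc ‖g - T f‖ ≤ ‖g‖ + ‖T‖ * ‖f‖ := (norm_sub_le _ _).trans (by gcongr; exact T.le_opNorm f)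
    _ ≤ _ := add_mul_le_sqrt_one_add_sq_mul_sqrt _ _ _

end PairNorm

section GraphGap

variable {𝕜 H K : Type*} [NontriviallyNormedField 𝕜] [NormedAddCommGroup H] [NormedSpace 𝕜 H]
  [NormedAddCommGroup K] [NormedSpace 𝕜 K]

/-- The relative distance from the point `(f, T f)` of the graph of `T` to the graph of `S`. -/
def graphGapAt (T S : H →L[𝕜] K) (f : H) : ℝ :=
  ⨅ g : H, pairNorm (f - g) (T f - S g) / pairNorm f (T f)

def graphGap (T S : H →L[𝕜] K) : ℝ :=
  ⨆ f : {x : H // x ≠ 0}, graphGapAt T S f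

lemma graphGapAt_nonneg (T S : H →L[𝕜] K) (f : H) : 0 ≤ graphGapAt T S f :=
  Real.iInf_nonneg fun _ => div_nonneg (pairNorm_nonneg _ _) (pairNorm_nonneg _ _)

lemma graphGap_nonneg (T S : H →L[𝕜] K) : 0 ≤ graphGap T S :=
  Real.iSup_nonneg fun f => graphGapAt_nonneg T S f

lemma graphGapAt_le (T S : H →L[𝕜] K) {f : H} (hf : f ≠ 0) : graphGapAt T S f ≤ ‖T - S‖ := by
  have hbdd : BddBelow (Set.range fun g : H => pairNorm (f - g) (T f - S g) / pairNorm f (T f)) :=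
    ⟨0, by rintro _ ⟨g, rfl⟩; exact div_nonneg (pairNorm_nonneg _ _) (pairNorm_nonneg _ _)⟩
  refine (ciInf_le hbdd f).trans ?_
  rw [sub_self, pairNorm_zero_left, div_le_iff₀ (pairNorm_pos hf _)]
  calc ‖T f - S f‖ = ‖(T - S) f‖ := rfl
    _ ≤ ‖T - S‖ * ‖f‖ := (T - S).le_opNorm f
    _ ≤ ‖T - S‖ * pairNorm f (T f) := by gcongr; exact norm_le_pairNorm _ _

lemma graphGap_le (T S : H →L[𝕜] K) : graphGap T S ≤ ‖T - S‖ :=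
  Real.iSup_le (fun f => graphGapAt_le T S f.2) (norm_nonneg _)

lemma norm_sub_apply_le_graphGapAt (T S : H →L[𝕜] K) {f : H} (hf : f ≠ 0) :
    ‖(T - S) f‖ ≤ Real.sqrt (1 + ‖T‖ ^ 2) * Real.sqrt (1 + ‖S‖ ^ 2) * graphGapAt T S f * ‖f‖ := by
  set C := Real.sqrt (1 + ‖T‖ ^ 2) * Real.sqrt (1 + ‖S‖ ^ 2) * ‖f‖
  have hC : 0 < C := by positivity
  rw [mul_right_comm, ← div_le_iff₀' hC]
  refine le_ciInf fun g => ?_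
  have hdiff : ‖(T - S) f‖ ≤ Real.sqrt (1 + ‖S‖ ^ 2) * pairNorm (f - g) (T f - S g) := by
    convert norm_sub_apply_le S (f - g) (T f - S g) using 2
    simp only [sub_apply, map_sub]
    abel
  rw [div_le_div_iff₀ hC (pairNorm_pos hf _)]
  calc ‖(T - S) f‖ * pairNorm f (T f)
      ≤ (Real.sqrt (1 + ‖S‖ ^ 2) * pairNorm (f - g) (T f - S g))
          * (Real.sqrt (1 + ‖T‖ ^ 2) * ‖f‖) :=
        mul_le_mul hdiff (pairNorm_apply_le T f) (pairNorm_nonneg _ _)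
          (mul_nonneg (Real.sqrt_nonneg _) (pairNorm_nonneg _ _))
    _ = pairNorm (f - g) (T f - S g) * C := by ring

lemma norm_sub_le_graphGap (T S : H →L[𝕜] K) :
    ‖T - S‖ ≤ Real.sqrt (1 + ‖T‖ ^ 2) * Real.sqrt (1 + ‖S‖ ^ 2) * graphGap T S := by
  have hbdd : BddAbove (Set.range fun f : {x : H // x ≠ 0} => graphGapAt T S f) :=
    ⟨‖T - S‖, by rintro _ ⟨f, rfl⟩; exact graphGapAt_le T S f.2⟩
  refine (T - S).opNorm_le_bound (by have := graphGap_nonneg T S; positivity) fun f => ?_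
  rcases eq_or_ne f 0 with rfl | hf
  · simp
  refine (norm_sub_apply_le_graphGapAt T S hf).trans ?_
  gcongr
  exact le_ciSup hbdd ⟨f, hf⟩

end GraphGap

lemma graphDist_eq_max_graphGap {H K : Type*} [NormedAddCommGroup H] [InnerProductSpace ℝ H]
    [NormedAddCommGroup K] [InnerProductSpace ℝ K] (Λ₁ Λ₂ : H →L[ℝ] K) :
    graphDist Λ₁ Λ₂ = max (graphGap Λ₁ Λ₂) (graphGap Λ₂ Λ₁) := by
  refine congrArg₂ max rfl (iSup_congr fun f₂ => iInf_congr fun f₁ => ?_)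
  rw [pairNorm_sub_comm]

theorem statement14_general {H K : Type*} [NormedAddCommGroup H] [InnerProductSpace ℝ H]
    [NormedAddCommGroup K] [InnerProductSpace ℝ K]
    (Λ₁ Λ₂ : H →L[ℝ] K) :
    ‖Λ₁ - Λ₂‖ / (Real.sqrt (1 + ‖Λ₁‖ ^ 2) * Real.sqrt (1 + ‖Λ₂‖ ^ 2))
        ≤ graphDist Λ₁ Λ₂ ∧
      graphDist Λ₁ Λ₂ ≤ ‖Λ₁ - Λ₂‖ := by
  rw [graphDist_eq_max_graphGap]
  constructor
  · rw [div_le_iff₀ (by positivity), mul_comm]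
    exact (norm_sub_le_graphGap Λ₁ Λ₂).trans (by gcongr; exact le_max_left _ _)
  · exact max_le (graphGap_le Λ₁ Λ₂) ((graphGap_le Λ₂ Λ₁).trans_eq (norm_sub_rev _ _))

/-- the two-sided comparison between the normalized graph distance of
the Cauchy data sets (graphs) of two bounded operators between Hilbert spaces and
their operator-norm distance:
`‖Λ₁−Λ₂‖/(√(1+‖Λ₁‖²)·√(1+‖Λ₂‖²)) ≤ dist(𝒞₁,𝒞₂) ≤ ‖Λ₁−Λ₂‖`. -/
theorem statement14 {H K : Type*} [NormedAddCommGroup H] [InnerProductSpace ℝ H]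
    [CompleteSpace H] [NormedAddCommGroup K] [InnerProductSpace ℝ K]
    [CompleteSpace K] (Λ₁ Λ₂ : H →L[ℝ] K) :
    ‖Λ₁ - Λ₂‖ / (Real.sqrt (1 + ‖Λ₁‖ ^ 2) * Real.sqrt (1 + ‖Λ₂‖ ^ 2))
        ≤ graphDist Λ₁ Λ₂ ∧
      graphDist Λ₁ Λ₂ ≤ ‖Λ₁ - Λ₂‖ :=
  statement14_general Λ₁ Λ₂
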